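/- Let α be a probability measure on ℝ^d with ∫ log(1+‖x‖) α(dx) < ∞. Let (U_n)_{n≥1} be i.i.d. uniform on (0,1), independent of (B_n)_{n≥1} i.i.d. with law α. For t > 0 set X_t = ∑_{n≥1} (U_1⋯U_{n-1})^{1/t} (1 - U_n^{1/t}) B_n. Then almost surely the series converges for every t > 0, the map t ↦ X_t is continuous on (0,∞), and X_t → B_1 as t ↓ 0. Consequently, since X_t has law μ(tα) for each t > 0 (because 1-U^{1/t} ∼ Beta(1,t) when U is uniform on (0,1)), the map t ↦ μ(tα) is weakly continuous on (0,∞) and μ(tα) converges weakly to α as t ↓ 0. -/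

import Mathlib

/-!
Write `s = 1 / t`. By the strong law of large numbers, almost surely `(∑_{j<n} log U_j) / n → -1`
and `log (1 + ‖B_n‖) / n → 0`, so `(U_0 ⋯ U_{n-1}) ^ s * ‖B_n‖` decays geometrically, uniformly in
`s ≥ s₀ > 0`. This summable majorant gives, by dominated convergence for series, continuity in
`s > 0` and the limit as `s → ∞`, where the `n`-th term tends to `B_0` for `n = 0` and to `0`
otherwise. Weak continuity of the laws is then dominated convergence for integrals, and
`1 - U ^ (1 / t) ∼ Beta(1, t)` follows from the change of variables `u = (1 - x) ^ t`.
-/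

open MeasureTheory ProbabilityTheory Filter

noncomputable section

/-- The Euler Beta function `B(a,b) = Γ(a)Γ(b)/Γ(a+b)`. -/
def eulerBeta (a b : ℝ) : ℝ := Real.Gamma a * Real.Gamma b / Real.Gamma (a + b)

/-- The Beta(a,b) probability measure on `(0,1)`. -/
def betaMeasure (a b : ℝ) : Measure ℝ :=
  (volume.restrict (Set.Ioo (0:ℝ) 1)).withDensity
    fun x => ENNReal.ofReal (x ^ (a - 1) * (1 - x) ^ (b - 1) / eulerBeta a b)

/-- Stick-breaking weights built from the sequence `Y`:
`W n = Y n * ∏_{j < n} (1 - Y j)` (0-indexed). -/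
def stickWeight {Ω : Type*} (Y : ℕ → Ω → ℝ) (n : ℕ) (ω : Ω) : ℝ :=
  Y n ω * ∏ j ∈ Finset.range n, (1 - Y j ω)

/-- `IsDirichletMean t α μ` says that `μ` is the law of the a.s. convergent series
`∑ W n • B n`, where the pairs `(B n, Y n)` are i.i.d., `B n ∼ α`, `Y n ∼ Beta(1,t)`,
all mutually independent, and `W` are the stick-breaking weights built from `Y`;
that is, `μ = μ(tα)` in the notation of the paper. -/
def IsDirichletMean {E : Type*} [NormedAddCommGroup E] [NormedSpace ℝ E]
    [MeasurableSpace E] (t : ℝ) (α μ : Measure E) : Prop :=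
  ∃ (Ω : Type) (_ : MeasurableSpace Ω) (P : Measure Ω) (_ : IsProbabilityMeasure P)
    (B : ℕ → Ω → E) (Y : ℕ → Ω → ℝ),
      iIndepFun (fun n ω => (B n ω, Y n ω)) P ∧
      (∀ n, Measure.map (fun ω => (B n ω, Y n ω)) P = α.prod (_root_.betaMeasure 1 t)) ∧
      (∀ᵐ ω ∂P, Summable fun n => stickWeight Y n ω • B n ω) ∧
      Measure.map (fun ω => ∑' n, stickWeight Y n ω • B n ω) P = μ

/-- The Cauchy distribution `c_{a+ib}` on `ℝ` (Dirac mass at `a` when `b = 0`). -/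
def cauchyMeasure (a b : ℝ) : Measure ℝ :=
  if b = 0 then Measure.dirac a
  else volume.withDensity fun x => ENNReal.ofReal ((1 / Real.pi) * b / ((x - a) ^ 2 + b ^ 2))

/-- The Stieltjes transform of a measure on `ℝ`. -/
def stieltjesTransform (α : Measure ℝ) (z : ℂ) : ℂ := ∫ w, ((w : ℂ) - z)⁻¹ ∂α

open Set Topology
open Finset (range sum_range_succ)

theorem tendsto_div_natCast_zero_of_tendsto_average {a : ℕ → ℝ} {M : ℝ}
    (h : Tendsto (fun n : ℕ => (∑ j ∈ range n, a j) / n) atTop (𝓝 M)) :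
    Tendsto (fun n : ℕ => a n / n) atTop (𝓝 0) := by
  have hshift : Tendsto (fun n : ℕ => (∑ j ∈ range (n + 1), a j) / (n + 1 : ℕ) * (1 + 1 / n))
      atTop (𝓝 (M * (1 + 0))) :=
    (h.comp (tendsto_add_atTop_nat 1)).mul (tendsto_one_div_atTop_nhds_zero_nat.const_add 1)
  rw [add_zero, mul_one] at hshift
  rw [← sub_self M]
  refine (hshift.sub h).congr' ?_
  filter_upwards [eventually_gt_atTop 0] with n hn
  have : (n : ℝ) ≠ 0 := by positivity
  simp only [sum_range_succ]
  push_cast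
  field_simp
  ring

theorem summable_exp_of_tendsto_div_neg {x : ℕ → ℝ} {c : ℝ} (hc : c < 0)
    (h : Tendsto (fun n : ℕ => x n / n) atTop (𝓝 c)) :
    Summable fun n => Real.exp (x n) := by
  have hle : ∀ᶠ n : ℕ in atTop, x n ≤ n * (c / 2) := by
    filter_upwards [h.eventually_lt_const (by linarith : c < c / 2), eventually_gt_atTop 0]
      with n hn hpos
    rw [div_lt_iff₀ (by exact_mod_cast hpos)] at hn
    linarith
  refine .of_norm_bounded_eventually (summable_geometric_of_lt_one (Real.exp_pos _).le
    (Real.exp_lt_one_iff.2 (by linarith : c / 2 < 0))) ?_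
  rw [Nat.cofinite_eq_atTop]
  filter_upwards [hle] with n hn
  rw [Real.norm_eq_abs, abs_of_pos (Real.exp_pos _), ← Real.exp_nat_mul]
  exact Real.exp_le_exp.2 hn

theorem summable_prod_rpow_mul_of_tendsto {u r : ℕ → ℝ} (hu : ∀ n, 0 < u n) (hr : ∀ n, 0 ≤ r n)
    {L : ℝ} (hL : L < 0)
    (hlogu : Tendsto (fun n : ℕ => (∑ j ∈ range n, Real.log (u j)) / n) atTop (𝓝 L))
    (hlogr : Tendsto (fun n : ℕ => Real.log (1 + r n) / n) atTop (𝓝 0)) {s : ℝ} (hs : 0 < s) :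
    Summable fun n => (∏ j ∈ range n, u j) ^ s * r n := by
  have hexp : Tendsto
      (fun n : ℕ => (s * ∑ j ∈ range n, Real.log (u j) + Real.log (1 + r n)) / n)
      atTop (𝓝 (s * L + 0)) := by
    simpa only [add_div, mul_div_assoc] using (hlogu.const_mul s).add hlogr
  refine (summable_exp_of_tendsto_div_neg (by nlinarith) hexp).of_nonneg_of_le
    (fun n => ?_) (fun n => ?_)
  all_goals have hprod : 0 < ∏ j ∈ range n, u j := Finset.prod_pos fun j _ => hu j
  · exact mul_nonneg (by positivity) (hr n)
  rw [Real.exp_add, Real.exp_log (by linarith [hr n]), ← Real.log_prod (fun j _ => (hu j).ne'),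
    mul_comm s, ← Real.rpow_def_of_pos hprod]
  gcongr
  linarith

section StickBreakingSeries

variable {E : Type*} [NormedAddCommGroup E] [NormedSpace ℝ E] (u : ℕ → ℝ) (b : ℕ → E)

/-- At `s = 1 / t` this is the `n`-th term of the series `X_t`. -/
def stickTerm (s : ℝ) (n : ℕ) : E := ((∏ j ∈ range n, u j) ^ s * (1 - u n ^ s)) • b n

def stickSeries (s : ℝ) : E := ∑' n, stickTerm u b s n

variable {u b}

theorem norm_stickTerm_le (hu : ∀ n, u n ∈ Icc 0 1) {s₀ s : ℝ} (hs₀ : 0 ≤ s₀) (hs : s₀ ≤ s)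
    (n : ℕ) : ‖stickTerm u b s n‖ ≤ (∏ j ∈ range n, u j) ^ s₀ * ‖b n‖ := by
  have hprod₀ : 0 ≤ ∏ j ∈ range n, u j := Finset.prod_nonneg fun j _ => (hu j).1
  have hprod₁ : ∏ j ∈ range n, u j ≤ 1 :=
    Finset.prod_le_one (fun j _ => (hu j).1) fun j _ => (hu j).2
  have hweight : 0 ≤ 1 - u n ^ s := sub_nonneg.2 (Real.rpow_le_one (hu n).1 (hu n).2 (hs₀.trans hs))
  have hweight' : 1 - u n ^ s ≤ 1 := sub_le_self _ (Real.rpow_nonneg (hu n).1 s)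
  rw [stickTerm, norm_smul, Real.norm_eq_abs, abs_of_nonneg (by positivity)]
  calc (∏ j ∈ range n, u j) ^ s * (1 - u n ^ s) * ‖b n‖
      ≤ (∏ j ∈ range n, u j) ^ s * ‖b n‖ := by
        gcongr
        exact mul_le_of_le_one_right (by positivity) hweight'
    _ ≤ (∏ j ∈ range n, u j) ^ s₀ * ‖b n‖ := by
        gcongr ?_ * _
        exact Real.rpow_le_rpow_of_exponent_ge' hprod₀ hprod₁ hs₀ hs

theorem continuousOn_stickTerm (n : ℕ) : ContinuousOn (fun s => stickTerm u b s n) (Ioi 0) :=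
  fun _ hs => (((Real.continuousAt_const_rpow' (ne_of_gt hs)).mul
    (continuousAt_const.sub (Real.continuousAt_const_rpow' (ne_of_gt hs)))).smul
      continuousAt_const).continuousWithinAt

theorem tendsto_stickTerm_atTop (hu : ∀ n, u n ∈ Ioo 0 1) (n : ℕ) :
    Tendsto (fun s => stickTerm u b s n) atTop (𝓝 (if n = 0 then b 0 else 0)) := by
  have hpow : ∀ {x : ℝ}, x ∈ Ioo 0 1 → Tendsto (fun s : ℝ => x ^ s) atTop (𝓝 0) :=
    fun hx => tendsto_rpow_atTop_of_base_lt_one _ (by linarith [hx.1]) hx.2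
  have hweight := (hpow (hu n)).const_sub 1
  rw [sub_zero] at hweight
  rcases n with _ | n
  · simpa [stickTerm] using hweight.smul_const (b 0)
  · have hprod : ∏ j ∈ range (n + 1), u j ∈ Ioo 0 1 := by
      refine ⟨Finset.prod_pos fun j _ => (hu j).1, ?_⟩
      rw [Finset.prod_range_succ]
      exact mul_lt_one_of_nonneg_of_lt_one_right
        (Finset.prod_le_one (fun j _ => (hu j).1.le) fun j _ => (hu j).2.le) (hu n).1.le (hu n).2
    simpa [stickTerm] using ((hpow hprod).mul hweight).smul_const (b (n + 1))

variable [CompleteSpace E]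

theorem summable_stickTerm (hu : ∀ n, u n ∈ Icc 0 1)
    (hdom : ∀ s₀ : ℝ, 0 < s₀ → Summable fun n => (∏ j ∈ range n, u j) ^ s₀ * ‖b n‖)
    {s : ℝ} (hs : 0 ≤ s) : Summable (stickTerm u b s) := by
  rcases hs.eq_or_lt with rfl | hs
  · exact summable_zero.congr fun n => by simp [stickTerm]
  · exact (hdom s hs).of_norm_bounded (norm_stickTerm_le hu hs.le le_rfl)

theorem continuousOn_stickSeries (hu : ∀ n, u n ∈ Icc 0 1)
    (hdom : ∀ s₀ : ℝ, 0 < s₀ → Summable fun n => (∏ j ∈ range n, u j) ^ s₀ * ‖b n‖) :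
    ContinuousOn (stickSeries u b) (Ioi 0) := by
  intro s (hs : 0 < s)
  have hcont : ContinuousOn (stickSeries u b) (Ioi (s / 2)) :=
    continuousOn_tsum (fun n => (continuousOn_stickTerm n).mono (Ioi_subset_Ioi (by linarith)))
      (hdom (s / 2) (by linarith)) fun n _ hx => norm_stickTerm_le hu (by linarith) hx.le n
  exact (hcont.continuousAt (Ioi_mem_nhds (by linarith))).continuousWithinAt

theorem tendsto_stickSeries_atTop (hu : ∀ n, u n ∈ Ioo 0 1)
    (hdom : ∀ s₀ : ℝ, 0 < s₀ → Summable fun n => (∏ j ∈ range n, u j) ^ s₀ * ‖b n‖) :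
    Tendsto (stickSeries u b) atTop (𝓝 (b 0)) := by
  have hlim := tendsto_tsum_of_dominated_convergence (hdom 1 one_pos) (tendsto_stickTerm_atTop hu)
    ((eventually_ge_atTop 1).mono fun s hs n =>
      norm_stickTerm_le (fun n => Ioo_subset_Icc_self (hu n)) zero_le_one hs n)
  rwa [tsum_ite_eq] at hlim

theorem stickSeries_one_div_properties (hu : ∀ n, u n ∈ Ioo 0 1)
    (hdom : ∀ s₀ : ℝ, 0 < s₀ → Summable fun n => (∏ j ∈ range n, u j) ^ s₀ * ‖b n‖) :
    (∀ s, 0 ≤ s → Summable (stickTerm u b s)) ∧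
      ContinuousOn (fun t => stickSeries u b (1 / t)) (Ioi 0) ∧
      Tendsto (fun t => stickSeries u b (1 / t)) (𝓝[>] 0) (𝓝 (b 0)) := by
  have hu' : ∀ n, u n ∈ Icc 0 1 := fun n => Ioo_subset_Icc_self (hu n)
  exact ⟨fun s => summable_stickTerm hu' hdom,
    (continuousOn_stickSeries hu' hdom).comp (continuousOn_const.div continuousOn_id
      fun _ ht => ne_of_gt ht) fun _ ht => mem_Ioi.2 (one_div_pos.2 ht),
    (tendsto_stickSeries_atTop hu hdom).comp
      (tendsto_inv_nhdsGT_zero.congr fun t => (one_div t).symm)⟩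

end StickBreakingSeries

instance isProbabilityMeasure_volume_restrict_Ioo_zero_one :
    IsProbabilityMeasure (volume.restrict (Ioo (0:ℝ) 1)) :=
  ⟨by simp [Real.volume_Ioo]⟩

theorem integrableOn_log_Ioo_zero_one : IntegrableOn Real.log (Ioo 0 1) :=
  intervalIntegral.intervalIntegrable_log'.1.mono_set Ioo_subset_Ioc_self

theorem setIntegral_log_Ioo_zero_one : ∫ x in Ioo (0:ℝ) 1, Real.log x = -1 := by
  rw [← integral_Ioc_eq_integral_Ioo, ← intervalIntegral.integral_of_le zero_le_one, integral_log]
  norm_num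

theorem eulerBeta_one_left {t : ℝ} (ht : 0 < t) : eulerBeta 1 t = t⁻¹ := by
  rw [eulerBeta, Real.Gamma_one, one_mul, add_comm, Real.Gamma_add_one ht.ne',
    div_mul_cancel_right₀ (Real.Gamma_pos_of_pos ht).ne']

theorem preimage_one_sub_rpow_inv_inter_Ioo {t : ℝ} (ht : 0 < t) (A : Set ℝ) :
    (fun u : ℝ => 1 - u ^ t⁻¹) ⁻¹' A ∩ Ioo 0 1 =
      (fun x : ℝ => (1 - x) ^ t) '' (A ∩ Ioo 0 1) := by
  ext u
  constructor
  · rintro ⟨hA, hu₀, hu₁⟩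
    have hpow : u ^ t⁻¹ ∈ Ioo 0 1 :=
      ⟨Real.rpow_pos_of_pos hu₀ _, Real.rpow_lt_one hu₀.le hu₁ (inv_pos.2 ht)⟩
    refine ⟨1 - u ^ t⁻¹, ⟨hA, by linarith [hpow.2], by linarith [hpow.1]⟩, ?_⟩
    simp only [sub_sub_cancel, Real.rpow_inv_rpow hu₀.le ht.ne']
  · rintro ⟨x, ⟨hA, hx₀, hx₁⟩, rfl⟩
    refine ⟨?_, Real.rpow_pos_of_pos (by linarith) _,
      Real.rpow_lt_one (by linarith) (by linarith) ht⟩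
    simpa only [mem_preimage, Real.rpow_rpow_inv (by linarith : (0:ℝ) ≤ 1 - x) ht.ne',
      sub_sub_cancel] using hA

theorem map_uniform_one_sub_rpow_inv {t : ℝ} (ht : 0 < t) :
    (volume.restrict (Ioo (0:ℝ) 1)).map (fun u => 1 - u ^ (1 / t)) = _root_.betaMeasure 1 t := by
  ext A hA
  have hS : MeasurableSet (A ∩ Ioo 0 1) := hA.inter measurableSet_Ioo
  have hderiv : ∀ x ∈ A ∩ Ioo 0 1,
      HasDerivWithinAt (fun x : ℝ => (1 - x) ^ t) (-1 * t * (1 - x) ^ (t - 1)) (A ∩ Ioo 0 1) x :=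
    fun x hx => (((hasDerivAt_id' x).const_sub 1).rpow_const
      (Or.inl (by linarith [hx.2.2]))).hasDerivWithinAt
  have hinj : InjOn (fun x : ℝ => (1 - x) ^ t) (A ∩ Ioo 0 1) := fun x hx y hy hxy => by
    simpa [Real.rpow_rpow_inv (by linarith [hx.2.2] : (0:ℝ) ≤ 1 - x) ht.ne',
      Real.rpow_rpow_inv (by linarith [hy.2.2] : (0:ℝ) ≤ 1 - y) ht.ne'] using
      congrArg (· ^ t⁻¹) hxy
  rw [Measure.map_apply (by fun_prop) hA, Measure.restrict_apply' measurableSet_Ioo, one_div,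
    preimage_one_sub_rpow_inv_inter_Ioo ht, ← setLIntegral_one,
    lintegral_image_eq_lintegral_abs_deriv_mul hS hderiv hinj, _root_.betaMeasure,
    withDensity_apply _ hA, Measure.restrict_restrict hA]
  refine setLIntegral_congr_fun hS fun x hx => ?_
  have hx₁ : 0 ≤ 1 - x := by linarith [hx.2.2]
  rw [mul_one, eulerBeta_one_left ht, sub_self, Real.rpow_zero, one_mul, div_inv_eq_mul,
    mul_assoc, neg_one_mul, abs_neg, abs_of_nonneg (by positivity), mul_comm]

theorem stickWeight_one_sub_rpow {Ω : Type*} {U : ℕ → Ω → ℝ} {ω : Ω} (hU : ∀ n, 0 ≤ U n ω)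
    (s : ℝ) (n : ℕ) :
    stickWeight (fun n ω => 1 - U n ω ^ s) n ω =
      (∏ j ∈ range n, U j ω) ^ s * (1 - U n ω ^ s) := by
  simp only [stickWeight, sub_sub_cancel, Real.finsetProd_rpow _ _ (fun j _ => hU j), mul_comm]

theorem marginals_of_map_prodMk_eq_prod {Ω S T : Type*} [MeasurableSpace Ω] [MeasurableSpace S]
    [MeasurableSpace T] {P : Measure Ω} {X : Ω → S} {Y : Ω → T} {μ : Measure S} {ν : Measure T}
    [IsProbabilityMeasure μ] [IsProbabilityMeasure ν]
    (h : P.map (fun ω => (X ω, Y ω)) = μ.prod ν) :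
    AEMeasurable X P ∧ AEMeasurable Y P ∧ P.map X = μ ∧ P.map Y = ν := by
  have hpair : AEMeasurable (fun ω => (X ω, Y ω)) P :=
    .of_map_ne_zero (by rw [h]; exact IsProbabilityMeasure.ne_zero _)
  have hX : AEMeasurable X P := measurable_fst.comp_aemeasurable hpair
  have hY : AEMeasurable Y P := measurable_snd.comp_aemeasurable hpair
  exact ⟨hX, hY, by rw [← Measure.fst_map_prodMk₀ hY, h, Measure.fst_prod],
    by rw [← Measure.snd_map_prodMk₀ hX, h, Measure.snd_prod]⟩

theorem ae_tendsto_average_comp {Ω S : Type*} [MeasurableSpace Ω] [MeasurableSpace S]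
    {P : Measure Ω} {Z : ℕ → Ω → S} {ρ : Measure S} (hZ : ∀ n, AEMeasurable (Z n) P)
    (hind : iIndepFun Z P) (hlaw : ∀ n, P.map (Z n) = ρ) {f : S → ℝ} (hf : Measurable f)
    (hfi : Integrable f ρ) :
    ∀ᵐ ω ∂P, Tendsto (fun n : ℕ => (∑ j ∈ range n, f (Z j ω)) / n) atTop
      (𝓝 (∫ x, f x ∂ρ)) := by
  have hident : ∀ i, IdentDistrib (fun ω => f (Z i ω)) (fun ω => f (Z 0 ω)) P P := fun i =>
    (⟨hZ i, hZ 0, (hlaw i).trans (hlaw 0).symm⟩ : IdentDistrib (Z i) (Z 0) P P).comp hf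
  rw [← hlaw 0] at hfi ⊢
  rw [integral_map (hZ 0) hf.aestronglyMeasurable]
  exact strong_law_ae_real _ (hfi.comp_aemeasurable (hZ 0))
    (fun i j hij => (hind.indepFun hij).comp hf hf) hident

theorem ae_summable_prod_rpow_mul_norm {Ω E : Type*} [MeasurableSpace Ω] {P : Measure Ω}
    [NormedAddCommGroup E] [MeasurableSpace E] [BorelSpace E] {B : ℕ → Ω → E} {U : ℕ → Ω → ℝ}
    {α : Measure E} (hB : ∀ n, AEMeasurable (B n) P) (hU : ∀ n, AEMeasurable (U n) P)
    (hindB : iIndepFun B P) (hindU : iIndepFun U P) (hBlaw : ∀ n, P.map (B n) = α)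
    (hUlaw : ∀ n, P.map (U n) = volume.restrict (Ioo 0 1))
    (hlog : Integrable (fun x => Real.log (1 + ‖x‖)) α) :
    ∀ᵐ ω ∂P, (∀ n, U n ω ∈ Ioo 0 1) ∧
      ∀ s₀ : ℝ, 0 < s₀ → Summable fun n => (∏ j ∈ range n, U j ω) ^ s₀ * ‖B n ω‖ := by
  have hmem : ∀ᵐ ω ∂P, ∀ n, U n ω ∈ Ioo 0 1 := ae_all_iff.2 fun n =>
    ae_of_ae_map (hU n) (by rw [hUlaw n]; exact ae_restrict_mem measurableSet_Ioo)
  filter_upwards [hmem,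
    ae_tendsto_average_comp hU hindU hUlaw Real.measurable_log integrableOn_log_Ioo_zero_one,
    ae_tendsto_average_comp hB hindB hBlaw (by fun_prop) hlog] with ω hmem hlogU hlogB
  rw [setIntegral_log_Ioo_zero_one] at hlogU
  exact ⟨hmem, fun s₀ hs₀ => summable_prod_rpow_mul_of_tendsto (fun n => (hmem n).1)
    (fun n => norm_nonneg _) neg_one_lt_zero hlogU
    (tendsto_div_natCast_zero_of_tendsto_average hlogB) hs₀⟩

theorem isDirichletMean_map_stickSeries {E : Type*} [NormedAddCommGroup E] [NormedSpace ℝ E]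
    [MeasurableSpace E] {Ω : Type} [MeasurableSpace Ω] {P : Measure Ω} [IsProbabilityMeasure P]
    {B : ℕ → Ω → E} {U : ℕ → Ω → ℝ} {α : Measure E} [IsProbabilityMeasure α]
    (hindep : iIndepFun (fun n ω => (B n ω, U n ω)) P)
    (hlaw : ∀ n, P.map (fun ω => (B n ω, U n ω)) = α.prod (volume.restrict (Ioo (0:ℝ) 1)))
    {t : ℝ} (ht : 0 < t)
    (hsum : ∀ᵐ ω ∂P, (∀ n, 0 ≤ U n ω) ∧ Summable (stickTerm (U · ω) (B · ω) (1 / t))) :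
    IsDirichletMean t α (P.map fun ω => stickSeries (U · ω) (B · ω) (1 / t)) := by
  have hφ : Measurable fun u : ℝ => 1 - u ^ (1 / t) := by fun_prop
  have hweight : ∀ᵐ ω ∂P, ∀ n, stickWeight (fun n ω => 1 - U n ω ^ (1 / t)) n ω • B n ω =
      stickTerm (U · ω) (B · ω) (1 / t) n :=
    hsum.mono fun ω h n => by rw [stickWeight_one_sub_rpow h.1]; rfl
  refine ⟨Ω, _, P, ‹_›, B, fun n ω => 1 - U n ω ^ (1 / t),
    hindep.comp (fun _ p => (p.1, 1 - p.2 ^ (1 / t))) (fun _ => by fun_prop), fun n => ?_,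
    (hsum.and hweight).mono fun ω h => h.1.2.congr fun n => (h.2 n).symm,
    Measure.map_congr (hweight.mono fun ω h => tsum_congr h)⟩
  have hpair : AEMeasurable (fun ω => (B n ω, U n ω)) P :=
    .of_map_ne_zero (by rw [hlaw n]; exact IsProbabilityMeasure.ne_zero _)
  rw [← map_uniform_one_sub_rpow_inv ht, ← Measure.map_id (μ := α), Measure.map_prod_map _ _
    measurable_id hφ, ← hlaw n, AEMeasurable.map_map_of_aemeasurable (by fun_prop) hpair]
  rfl

theorem aemeasurable_tsum_of_ae_summable {Ω E : Type*} [MeasurableSpace Ω] {P : Measure Ω}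
    [NormedAddCommGroup E] [MeasurableSpace E] [BorelSpace E] [SecondCountableTopology E]
    {f : ℕ → Ω → E} (hf : ∀ n, AEMeasurable (f n) P)
    (hsum : ∀ᵐ ω ∂P, Summable fun n => f n ω) : AEMeasurable (fun ω => ∑' n, f n ω) P :=
  aemeasurable_of_tendsto_metrizable_ae atTop
    (fun _ => Finset.aemeasurable_fun_sum _ fun n _ => hf n)
    (hsum.mono fun _ h => h.hasSum.tendsto_sum_nat)

theorem tendsto_integral_comp_of_ae_tendsto {Ω E : Type*} [MeasurableSpace Ω] {P : Measure Ω}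
    [IsFiniteMeasure P] [TopologicalSpace E] [MeasurableSpace E] [OpensMeasurableSpace E]
    {ι : Type*} {l : Filter ι} [l.IsCountablyGenerated] {Y : ι → Ω → E} {Y₀ : Ω → E}
    (g : BoundedContinuousFunction E ℝ) (hY : ∀ᶠ i in l, AEMeasurable (Y i) P)
    (hlim : ∀ᵐ ω ∂P, Tendsto (fun i => Y i ω) l (𝓝 (Y₀ ω))) :
    Tendsto (fun i => ∫ ω, g (Y i ω) ∂P) l (𝓝 (∫ ω, g (Y₀ ω) ∂P)) :=
  tendsto_integral_filter_of_dominated_convergence (fun _ => ‖g‖)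
    (hY.mono fun _ h => (g.continuous.measurable.comp_aemeasurable h).aestronglyMeasurable)
    (Eventually.of_forall fun _ => Eventually.of_forall fun _ => g.norm_coe_le_norm _)
    (integrable_const _) (hlim.mono fun _ h => (g.continuous.tendsto _).comp h)

/-- **Proposition 3.4.** With `(Uₙ)` i.i.d. uniform on `(0,1)` independent of `(Bₙ)`
i.i.d. `∼ α ∈ FT_d`, the series `X_t = ∑ₙ (U₁⋯U_{n-1})^{1/t}(1-Uₙ^{1/t})Bₙ` converges
a.s. for every `t > 0`, `t ↦ X_t` is a.s. continuous on `(0,∞)` with `X_t → B₁` as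
`t ↓ 0`; consequently `X_t ∼ μ(tα)`, `t ↦ μ(tα)` is weakly continuous on `(0,∞)` and
`μ(tα) → α` weakly as `t ↓ 0`. -/
theorem dirichletCurve_weakly_continuous
    {d : ℕ} (α : Measure (EuclideanSpace ℝ (Fin d))) [IsProbabilityMeasure α]
    (hlog : Integrable (fun x => Real.log (1 + ‖x‖)) α)
    {Ω : Type} [MeasurableSpace Ω] (P : Measure Ω) [IsProbabilityMeasure P]
    (B : ℕ → Ω → EuclideanSpace ℝ (Fin d)) (U : ℕ → Ω → ℝ)
    (hindep : iIndepFun (fun n ω => (B n ω, U n ω)) P)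
    (hlaw : ∀ n, Measure.map (fun ω => (B n ω, U n ω)) P
      = α.prod (volume.restrict (Set.Ioo (0:ℝ) 1)))
    (X : ℝ → Ω → EuclideanSpace ℝ (Fin d))
    (hX : ∀ t ω, X t ω = ∑' n,
      ((∏ j ∈ Finset.range n, U j ω) ^ (1 / t) * (1 - U n ω ^ (1 / t))) • B n ω) :
    (∀ᵐ ω ∂P,
      (∀ t, 0 < t → Summable fun n =>
        ((∏ j ∈ Finset.range n, U j ω) ^ (1 / t) * (1 - U n ω ^ (1 / t))) • B n ω) ∧
      ContinuousOn (fun t => X t ω) (Set.Ioi (0:ℝ)) ∧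
      Filter.Tendsto (fun t => X t ω) (nhdsWithin 0 (Set.Ioi (0:ℝ))) (nhds (B 0 ω))) ∧
    (∀ t, 0 < t → IsDirichletMean t α (Measure.map (X t) P)) ∧
    (∀ g : BoundedContinuousFunction (EuclideanSpace ℝ (Fin d)) ℝ,
      ContinuousOn (fun t => ∫ ω, g (X t ω) ∂P) (Set.Ioi (0:ℝ)) ∧
      Filter.Tendsto (fun t => ∫ ω, g (X t ω) ∂P) (nhdsWithin 0 (Set.Ioi (0:ℝ)))
        (nhds (∫ x, g x ∂α))) := by
  obtain rfl : X = fun t ω => stickSeries (U · ω) (B · ω) (1 / t) := funext₂ hX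
  have hmarg n := marginals_of_map_prodMk_eq_prod (hlaw n)
  have hB n : AEMeasurable (B n) P := (hmarg n).1
  have hU n : AEMeasurable (U n) P := (hmarg n).2.1
  have hgood := ae_summable_prod_rpow_mul_norm hB hU
    (hindep.comp (fun _ => Prod.fst) fun _ => measurable_fst)
    (hindep.comp (fun _ => Prod.snd) fun _ => measurable_snd) (fun n => (hmarg n).2.2.1)
    (fun n => (hmarg n).2.2.2) hlog
  have hpath := hgood.mono fun ω h => stickSeries_one_div_properties h.1 h.2
  have hXm : ∀ t, 0 < t → AEMeasurable (fun ω => stickSeries (U · ω) (B · ω) (1 / t)) P :=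
    fun t ht => aemeasurable_tsum_of_ae_summable (fun n => by unfold stickTerm; fun_prop)
      (hpath.mono fun ω h => h.1 _ (one_div_pos.2 ht).le)
  refine ⟨hpath.mono fun ω h => ⟨fun k _ => ?_, h.2⟩,
    fun t ht => isDirichletMean_map_stickSeries hindep hlaw ht ?_, fun g => ⟨fun t ht => ?_, ?_⟩⟩
  · -- `k : ℕ` here, so `1 / k` is a natural-number exponent.
    exact (h.1 (1 / k : ℕ) (Nat.cast_nonneg _)).congr fun n => by
      simp only [stickTerm, Real.rpow_natCast]
  · exact (hgood.and hpath).mono fun ω h =>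
      ⟨fun n => (h.1.1 n).1.le, h.2.1 _ (one_div_pos.2 ht).le⟩
  · exact tendsto_integral_comp_of_ae_tendsto g (eventually_mem_nhdsWithin.mono hXm)
      (hpath.mono fun ω h => h.2.1 t ht)
  · rw [← (hmarg 0).2.2.1, integral_map (hB 0) g.continuous.aestronglyMeasurable]
    exact tendsto_integral_comp_of_ae_tendsto g (eventually_mem_nhdsWithin.mono hXm)
      (hpath.mono fun ω h => h.2.2)

end
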